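/- Let p be a prime number and n a positive integer. For every positive integer r, and also for r = ∞, one has a_r(p^n) = PL_r(n), i.e. the total number of group-partitions with at most r factors, summed over all isomorphism classes of abelian groups of order p^n, equals the number of plane partitions of n with at most r nonzero rows. -/

import Mathlib

open scoped ENat

/-- A group-partition: a finite weakly descending (each factor embeds in the previous one)
sequence of nontrivial finite abelian groups, recording the sequence of isomorphism classes
`G₁ ⊇ G₂ ⊇ ⋯` of a decomposition `G = G₁ ⊕ G₂ ⊕ ⋯`. -/
structure AbGroupPartition : Type 1 where
  len : ℕ
  factor : Fin len → Type
  [grp : ∀ j, AddCommGroup (factor j)]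
  [fin : ∀ j, Finite (factor j)]
  nontriv : ∀ j, Nontrivial (factor j)
  mono : ∀ (j : ℕ) (h : j + 1 < len),
    ∃ f : factor ⟨j + 1, h⟩ →+ factor ⟨j, Nat.lt_of_succ_lt h⟩, Function.Injective f

attribute [instance] AbGroupPartition.grp AbGroupPartition.fin

/-- `P` is a group-partition of `G`, i.e. `G ≅ G₁ ⊕ ⋯ ⊕ G_len`. -/
def AbGroupPartition.IsPartitionOf (P : AbGroupPartition) (G : Type*) [AddCommGroup G] : Prop :=
  Nonempty (G ≃+ ((j : Fin P.len) → P.factor j))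

/-- Componentwise isomorphism of group-partitions (i.e. equality of the underlying
sequences of isomorphism classes). -/
def AbGroupPartition.Equiv (P Q : AbGroupPartition) : Prop :=
  ∃ h : P.len = Q.len, ∀ j : Fin P.len, Nonempty (P.factor j ≃+ Q.factor (Fin.cast h j))

/-- `π_r(G)`: the number of group-partitions of `G` with at most `r` factors
(`r = ⊤` meaning no restriction on the number of factors). -/
noncomputable def partitionCount (r : ℕ∞) (G : Type*) [AddCommGroup G] : ℕ :=
  Nat.card (Quot fun P Q : {P : AbGroupPartition // P.IsPartitionOf G ∧ (P.len : ℕ∞) ≤ r} =>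
    P.1.Equiv Q.1)

/-- `a_r(n) = ∑_{|G| = n} π_r(G)`: the number of isomorphism classes of pairs of
a finite abelian group of order `n` together with a group-partition of it with at most `r`
factors (`r = ⊤` meaning no restriction). -/
noncomputable def abelianCount (r : ℕ∞) (n : ℕ) : ℕ :=
  Nat.card (Quot fun P Q : {P : AbGroupPartition //
      (∏ j, Nat.card (P.factor j)) = n ∧ (P.len : ℕ∞) ≤ r} => P.1.Equiv Q.1)

/-- A plane partition of `n`: a doubly indexed family of nonnegative integers, weakly
decreasing along each row and column, with finite support and total sum `n`. -/
structure PlanePartition (n : ℕ) where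
  part : ℕ → ℕ → ℕ
  decr_row : ∀ j k, part j (k + 1) ≤ part j k
  decr_col : ∀ j k, part (j + 1) k ≤ part j k
  finite : (Function.support fun x : ℕ × ℕ => part x.1 x.2).Finite
  sum_eq : ∑ᶠ (j : ℕ) (k : ℕ), part j k = n

/-- `PL_r(n)`: the number of plane partitions of `n` with at most `r` nonzero rows
(rows are indexed from `0`, so "at most `r` nonzero rows" means row `j` vanishes
whenever `r ≤ j`); `r = ⊤` counts all plane partitions. -/
noncomputable def planePartitionCount (r : ℕ∞) (n : ℕ) : ℕ :=
  Nat.card {P : PlanePartition n // ∀ j : ℕ, r ≤ (j : ℕ∞) → ∀ k, P.part j k = 0}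


/-!
By the structure theorem, a finite abelian group of order `p ^ m` is `∏ᵢ ℤ/p^{λᵢ}` for a
partition `λ` of `m`. The order of `(p ^ c • G)[p]` is `p ^ #{i | c < λᵢ}`, and this subgroup can
only grow along an injective homomorphism; for antitone `λ, μ` this forces `λ ≤ μ` entrywise
whenever `∏ ℤ/p^{λᵢ}` embeds into `∏ ℤ/p^{μᵢ}`, and `λ = μ` for isomorphic groups. Conversely
`ℤ/p^a` embeds into `ℤ/p^b` for `a ≤ b`. Hence sending a group-partition `G₁ ⊇ G₂ ⊇ ⋯` of a group
of order `p ^ n` to the array whose `j`-th row is the partition of `Gⱼ` is a bijection onto plane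
partitions of `n`, and the number of factors becomes the number of nonzero rows.
-/

open Finset

section Embedding

variable {p : ℕ} [hp : Fact p.Prime]

noncomputable def zmodPowEmbedding {a b : ℕ} (hab : a ≤ b) : ZMod (p ^ a) →+ ZMod (p ^ b) :=
  ZMod.lift _ ⟨zmultiplesHom _ ((p ^ (b - a) : ℕ) : ZMod (p ^ b)), by
    rw [zmultiplesHom_apply, natCast_zsmul, nsmul_eq_mul, ← Nat.cast_mul, ← pow_add,
      Nat.add_sub_cancel' hab, ZMod.natCast_self]⟩

theorem zmodPowEmbedding_injective {a b : ℕ} (hab : a ≤ b) :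
    Function.Injective (zmodPowEmbedding (p := p) hab) := by
  refine (injective_iff_map_eq_zero _).2 fun x hx => ?_
  rw [← ZMod.intCast_zmod_cast x] at hx ⊢
  rw [zmodPowEmbedding, ZMod.lift_coe, zmultiplesHom_apply, zsmul_eq_mul, ← Int.cast_natCast,
    ← Int.cast_mul, ZMod.intCast_zmod_eq_zero_iff_dvd, Nat.cast_pow, Nat.cast_pow,
    ← Nat.sub_add_cancel hab, pow_add, Nat.add_sub_cancel, mul_comm (_ ^ (b - a))] at hx
  rw [ZMod.intCast_zmod_eq_zero_iff_dvd, Nat.cast_pow]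
  exact (mul_dvd_mul_iff_right (pow_ne_zero _ (Int.natCast_ne_zero.2 hp.out.ne_zero))).1 hx

end Embedding

def socleOfMultiples (p c : ℕ) (G : Type*) [AddMonoid G] : Set G :=
  {x | p • x = 0 ∧ ∃ y, p ^ c • y = x}

section Socle

variable (p c : ℕ)

theorem mapsTo_socleOfMultiples {G H : Type*} [AddMonoid G] [AddMonoid H] (f : G →+ H) :
    Set.MapsTo f (socleOfMultiples p c G) (socleOfMultiples p c H) :=
  fun _ ⟨hx, y, hy⟩ => ⟨by rw [← map_nsmul, hx, map_zero], f y, by rw [← map_nsmul, hy]⟩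

theorem card_socleOfMultiples_le_of_injective {G H : Type*} [AddMonoid G] [AddMonoid H]
    [Finite H] {f : G →+ H} (hf : Function.Injective f) :
    Nat.card (socleOfMultiples p c G) ≤ Nat.card (socleOfMultiples p c H) :=
  Nat.card_le_card_of_injective _ ((mapsTo_socleOfMultiples p c f).restrict_inj.2 hf.injOn)

theorem socleOfMultiples_pi {ι : Type*} (G : ι → Type*) [∀ i, AddMonoid (G i)] :
    socleOfMultiples p c (∀ i, G i) = Set.univ.pi fun i => socleOfMultiples p c (G i) := by
  ext x
  simp only [socleOfMultiples, Set.mem_ofPred_eq, Set.mem_univ_pi, funext_iff, Pi.smul_apply,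
    Pi.zero_apply, forall_and, Classical.skolem]

theorem card_socleOfMultiples_pi {ι : Type*} [Fintype ι] (G : ι → Type*)
    [∀ i, AddMonoid (G i)] :
    Nat.card (socleOfMultiples p c (∀ i, G i)) = ∏ i, Nat.card (socleOfMultiples p c (G i)) := by
  rw [socleOfMultiples_pi, Nat.card_congr (Equiv.Set.univPi _), Nat.card_pi]

variable {p} [hp : Fact p.Prime]

theorem socleOfMultiples_zmod_eq_zmultiples (d : ℕ) :
    socleOfMultiples p c (ZMod (p ^ (c + d + 1))) =
      AddSubgroup.zmultiples ((p ^ (c + d) : ℕ) : ZMod (p ^ (c + d + 1))) := by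
  ext x
  rw [SetLike.mem_coe, AddSubgroup.mem_zmultiples_iff]
  constructor
  · rintro ⟨hx, -⟩
    rw [← ZMod.natCast_zmod_val x, nsmul_eq_mul, ← Nat.cast_mul, ZMod.natCast_eq_zero_iff] at hx
    obtain ⟨t, ht⟩ :=
      Nat.dvd_of_mul_dvd_mul_left hp.out.pos ((pow_succ' p (c + d)).symm.dvd.trans hx)
    refine ⟨t, ?_⟩
    rw [← ZMod.natCast_zmod_val x, ht, natCast_zsmul, nsmul_eq_mul, Nat.cast_mul, mul_comm]
  · rintro ⟨k, rfl⟩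
    refine ⟨?_, k • ((p ^ d : ℕ) : ZMod _), ?_⟩
    · rw [smul_comm, nsmul_eq_mul, ← Nat.cast_mul, ← pow_succ', ZMod.natCast_self, smul_zero]
    · rw [smul_comm, nsmul_eq_mul, ← Nat.cast_mul, ← pow_add]

theorem card_socleOfMultiples_zmod (m : ℕ) :
    Nat.card (socleOfMultiples p c (ZMod (p ^ m))) = if c < m then p else 1 := by
  split_ifs with hcm
  · obtain ⟨d, rfl⟩ := Nat.exists_eq_add_of_lt hcm
    rw [socleOfMultiples_zmod_eq_zmultiples, SetLike.coe_sort_coe, Nat.card_zmultiples,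
      ZMod.addOrderOf_coe _ (pow_ne_zero _ hp.out.ne_zero),
      Nat.gcd_eq_right (pow_dvd_pow _ (Nat.le_succ _)), pow_succ,
      Nat.mul_div_cancel_left _ (pow_pos hp.out.pos _)]
  · have hzero : ((p ^ c : ℕ) : ZMod (p ^ m)) = 0 :=
      (ZMod.natCast_eq_zero_iff _ _).2 (pow_dvd_pow p (not_lt.1 hcm))
    refine Nat.card_eq_one_iff_exists.2 ⟨⟨0, nsmul_zero _, 0, nsmul_zero _⟩, ?_⟩
    rintro ⟨x, -, y, rfl⟩
    simp [nsmul_eq_mul, hzero]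

theorem card_socleOfMultiples_pi_zmod_pow {ι : Type*} [Fintype ι] (μ : ι → ℕ) :
    Nat.card (socleOfMultiples p c (∀ i, ZMod (p ^ μ i))) = p ^ #{i | c < μ i} := by
  rw [card_socleOfMultiples_pi]
  simp only [card_socleOfMultiples_zmod]
  simp [prod_ite]

end Socle

theorem le_of_forall_card_filter_lt_le {N : ℕ} {μ ν : Fin N → ℕ} (hμ : Antitone μ)
    (hν : Antitone ν) (h : ∀ c, #{i | c < μ i} ≤ #{i | c < ν i}) : μ ≤ ν := by
  intro i
  by_contra! hi
  have hle : #(Iic i) ≤ #(Iio i) := calc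
    #(Iic i) ≤ #{j | ν i < μ j} := card_le_card fun j hj => by
      simpa using hi.trans_le (hμ (mem_Iic.1 hj))
    _ ≤ #{j | ν i < ν j} := h (ν i)
    _ ≤ #(Iio i) := card_le_card fun j hj => by
      simp only [mem_filter, mem_univ, true_and] at hj
      simpa using lt_of_not_ge fun hij => hj.not_ge (hν hij)
  simp [Fin.card_Iic, Fin.card_Iio] at hle

section Comparison

variable {p : ℕ} [Fact p.Prime]

theorem card_filter_lt_le_of_injective {ι κ : Type*} [Fintype ι] [Fintype κ] {μ : ι → ℕ}
    {ν : κ → ℕ} {f : (∀ i, ZMod (p ^ μ i)) →+ ∀ k, ZMod (p ^ ν k)} (hf : Function.Injective f)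
    (c : ℕ) : #{i | c < μ i} ≤ #{k | c < ν k} := by
  have h := card_socleOfMultiples_le_of_injective p c hf
  rwa [card_socleOfMultiples_pi_zmod_pow, card_socleOfMultiples_pi_zmod_pow,
    Nat.pow_le_pow_iff_right (Fact.out : p.Prime).one_lt] at h

theorem le_of_injective_pi_zmod_pow {n : ℕ} {s t : ℕ → ℕ} (hs : Antitone s) (ht : Antitone t)
    {f : (∀ i : Fin n, ZMod (p ^ s i)) →+ ∀ i : Fin n, ZMod (p ^ t i)}
    (hf : Function.Injective f) (i : Fin n) : s i ≤ t i :=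
  le_of_forall_card_filter_lt_le (fun _ _ h => hs h) (fun _ _ h => ht h)
    (card_filter_lt_le_of_injective hf) i

theorem eq_of_addEquiv_pi_zmod_pow {n : ℕ} {s t : ℕ → ℕ} (hs : Antitone s) (ht : Antitone t)
    (e : (∀ i : Fin n, ZMod (p ^ s i)) ≃+ ∀ i : Fin n, ZMod (p ^ t i)) (i : Fin n) :
    s i = t i :=
  le_antisymm (le_of_injective_pi_zmod_pow hs ht (f := e.toAddMonoidHom) e.injective i)
    (le_of_injective_pi_zmod_pow ht hs (f := e.symm.toAddMonoidHom) e.symm.injective i)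

end Comparison

def extendByZero {α : Type*} [Zero α] {K : ℕ} (g : Fin K → α) (k : ℕ) : α :=
  if h : k < K then g ⟨k, h⟩ else 0

theorem antitone_extendByZero {α : Type*} [Preorder α] [Zero α] {K : ℕ} {g : Fin K → α}
    (hg : Antitone g) (h0 : ∀ i, 0 ≤ g i) : Antitone (extendByZero g) := by
  intro a b hab
  unfold extendByZero
  split_ifs with hb ha ha
  · exact hg hab
  · exact absurd (hab.trans_lt hb) ha
  · exact h0 _
  · exact le_rfl

theorem lt_and_lt_of_extendByZero_ne_zero {n L : ℕ} {t : Fin L → ℕ → ℕ}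
    (ht : ∀ j k, n ≤ k → t j k = 0) {j k : ℕ} (h : extendByZero t j k ≠ 0) : j < L ∧ k < n := by
  unfold extendByZero at h
  split_ifs at h with hj
  · exact ⟨hj, lt_of_not_ge fun hk => h (ht _ k hk)⟩
  · exact absurd rfl h

theorem lt_sum_of_antitone {K : ℕ} {g : Fin K → ℕ} (hg : Antitone g) {i : Fin K}
    (hi : g i ≠ 0) : (i : ℕ) < ∑ j, g j := calc
  (i : ℕ) < ∑ _j ∈ Iic i, 1 := by simp
  _ ≤ ∑ j ∈ Iic i, g j :=
    sum_le_sum fun j hj => (Nat.one_le_iff_ne_zero.2 hi).trans (hg (mem_Iic.1 hj))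
  _ ≤ ∑ j, g j := sum_le_sum_of_subset (subset_univ _)

section Classification

variable {p : ℕ}

theorem card_pi_zmod_pow {ι : Type*} [Fintype ι] (t : ι → ℕ) :
    Nat.card (∀ i, ZMod (p ^ t i)) = p ^ ∑ i, t i := by
  simp [Nat.card_pi, prod_pow_eq_pow_sum]

def piZModPowEquivSupport {ι : Type*} (f : ι → ℕ) :
    (∀ i, ZMod (p ^ f i)) ≃+ ∀ i : {i // f i ≠ 0}, ZMod (p ^ f i) :=
  haveI : ∀ i : {i // ¬f i ≠ 0}, Unique (ZMod (p ^ f i)) := fun i => by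
    rw [not_not.1 i.2, pow_zero]
    infer_instance
  (RingEquiv.piEquivPiSubtypeProd _ _).toAddEquiv.trans AddEquiv.prodUnique

def piZModPowFinEquiv (t : ℕ → ℕ) {M N : ℕ} (hM : ∀ i, M ≤ i → t i = 0)
    (hN : ∀ i, N ≤ i → t i = 0) :
    (∀ i : Fin M, ZMod (p ^ t i)) ≃+ ∀ i : Fin N, ZMod (p ^ t i) :=
  let supportEquiv : {i : Fin M // t i ≠ 0} ≃ {i : Fin N // t i ≠ 0} :=
    { toFun i := ⟨⟨i.1, lt_of_not_ge fun h => i.2 (hN _ h)⟩, i.2⟩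
      invFun i := ⟨⟨i.1, lt_of_not_ge fun h => i.2 (hM _ h)⟩, i.2⟩
      left_inv _ := rfl
      right_inv _ := rfl }
  (piZModPowEquivSupport _).trans <|
    (RingEquiv.piCongrLeft (fun i : {i : Fin N // t i ≠ 0} => ZMod (p ^ t i))
      supportEquiv).toAddEquiv.trans (piZModPowEquivSupport fun i : Fin N => t i).symm

theorem exists_antitone_pi_zmod_pow_addEquiv {ι : Type*} [Fintype ι] (f : ι → ℕ) :
    ∃ g : Fin (Fintype.card ι) → ℕ, Antitone g ∧ ∑ i, g i = ∑ i, f i ∧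
      Nonempty ((∀ i, ZMod (p ^ f i)) ≃+ ∀ i, ZMod (p ^ g i)) := by
  let σ : Fin (Fintype.card ι) ≃ ι := (Fintype.equivFin ι).symm
  let τ : Equiv.Perm (Fin (Fintype.card ι)) := Fin.revPerm.trans (Tuple.sort (f ∘ σ))
  exact ⟨f ∘ σ ∘ τ, fun i j hij => Tuple.monotone_sort (f ∘ σ) (Fin.rev_le_rev.2 hij),
    Equiv.sum_comp (τ.trans σ) f,
    ⟨(RingEquiv.piCongrLeft (fun i => ZMod (p ^ f i)) (τ.trans σ)).symm.toAddEquiv⟩⟩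

theorem apply_zero_ne_zero_of_addEquiv {G : Type*} [AddCommGroup G] [Nontrivial G] {n : ℕ}
    {t : ℕ → ℕ} (ht : Antitone t) (φ : G ≃+ ∀ i : Fin n, ZMod (p ^ t i)) : t 0 ≠ 0 := by
  intro h0
  have (i : Fin n) : Subsingleton (ZMod (p ^ t i)) := by
    rw [Nat.eq_zero_of_le_zero ((ht (Nat.zero_le i)).trans h0.le), pow_zero]
    infer_instance
  exact not_subsingleton G φ.toEquiv.subsingleton

variable [hp : Fact p.Prime]

theorem exists_addEquiv_pi_zmod_pow {n : ℕ} (G : Type*) [AddCommGroup G] [Finite G]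
    (hG : Nat.card G ∣ p ^ n) :
    ∃ (ι : Type) (_ : Fintype ι) (f : ι → ℕ), ∑ i, f i ≤ n ∧
      Nonempty (G ≃+ ∀ i, ZMod (p ^ f i)) := by
  obtain ⟨ι, _, q, -, e, ⟨φ⟩⟩ := AddCommGroup.equiv_directSum_zmod_of_finite G
  let ψ : G ≃+ ∀ i, ZMod (q i ^ e i) := φ.trans (DirectSum.addEquivProd _)
  have hcard : ∏ i, q i ^ e i = Nat.card G := by
    rw [Nat.card_congr ψ.toEquiv, Nat.card_pi]
    simp
  have hdvd (i : ι) : q i ^ e i ∣ p ^ n := (dvd_prod_of_mem _ (mem_univ i)).trans (hcard ▸ hG)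
  choose f _ hf using fun i => (Nat.dvd_prime_pow hp.out).1 (hdvd i)
  refine ⟨ι, inferInstance, f, ?_,
    ⟨ψ.trans (AddEquiv.piCongrRight fun i => (ZMod.ringEquivCongr (hf i)).toAddEquiv)⟩⟩
  rw [← Nat.pow_dvd_pow_iff_le_right hp.out.one_lt, ← prod_pow_eq_pow_sum]
  simpa [← hf, hcard] using hG

theorem exists_antitone_addEquiv_pi_fin_zmod_pow {n : ℕ} (G : Type*) [AddCommGroup G] [Finite G]
    (hG : Nat.card G ∣ p ^ n) :
    ∃ t : ℕ → ℕ, Antitone t ∧ (∀ i, n ≤ i → t i = 0) ∧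
      Nonempty (G ≃+ ∀ i : Fin n, ZMod (p ^ t i)) := by
  obtain ⟨ι, _, f, hfn, ⟨φ⟩⟩ := exists_addEquiv_pi_zmod_pow G hG
  obtain ⟨g, hg, hgf, ⟨ψ⟩⟩ := exists_antitone_pi_zmod_pow_addEquiv (p := p) f
  have hK (i : ℕ) (hi : Fintype.card ι ≤ i) : extendByZero g i = 0 := dif_neg hi.not_gt
  have hn (i : ℕ) (hi : n ≤ i) : extendByZero g i = 0 := by
    unfold extendByZero
    split_ifs with h
    · by_contra hne
      exact (lt_sum_of_antitone hg hne).not_ge (hgf ▸ hfn |>.trans hi)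
    · rfl
  refine ⟨extendByZero g, antitone_extendByZero hg fun _ => Nat.zero_le _, hn,
    ⟨φ.trans (ψ.trans ?_)⟩⟩
  refine (AddEquiv.piCongrRight fun i => (ZMod.ringEquivCongr ?_).toAddEquiv).trans
    (piZModPowFinEquiv _ hK hn)
  simp [extendByZero]

end Classification

theorem finsum_finsum_eq_sum_range_sum_range (f : ℕ → ℕ → ℕ) {a b : ℕ}
    (h : ∀ j k, f j k ≠ 0 → j < a ∧ k < b) :
    ∑ᶠ (j) (k), f j k = ∑ j ∈ range a, ∑ k ∈ range b, f j k := by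
  have hrow (j : ℕ) : ∑ᶠ k, f j k = ∑ k ∈ range b, f j k :=
    finsum_eq_sum_of_support_subset _ fun k hk => by simpa using (h j k hk).2
  rw [finsum_congr hrow]
  refine finsum_eq_sum_of_support_subset _ fun j hj => ?_
  obtain ⟨k, -, hk⟩ := exists_ne_zero_of_sum_ne_zero hj
  simpa using (h j k hk).1

namespace AbGroupPartition

theorem Equiv.refl (P : AbGroupPartition) : P.Equiv P :=
  ⟨rfl, fun _ => ⟨AddEquiv.refl _⟩⟩

theorem Equiv.symm {P Q : AbGroupPartition} (h : P.Equiv Q) : Q.Equiv P := by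
  obtain ⟨hlen, e⟩ := h
  exact ⟨hlen.symm, fun j => by simpa using (e (Fin.cast hlen.symm j)).map AddEquiv.symm⟩

theorem Equiv.trans {P Q R : AbGroupPartition} (hPQ : P.Equiv Q) (hQR : Q.Equiv R) :
    P.Equiv R := by
  obtain ⟨hPQ, e⟩ := hPQ
  obtain ⟨hQR, e'⟩ := hQR
  exact ⟨hPQ.trans hQR, fun j => by simpa using (e j).map2 AddEquiv.trans (e' (Fin.cast hPQ j))⟩

theorem equivalence_equiv : Equivalence AbGroupPartition.Equiv :=
  ⟨Equiv.refl, Equiv.symm, Equiv.trans⟩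

end AbGroupPartition

namespace PlanePartition

section Basic

variable {n : ℕ} (Q : PlanePartition n)

theorem part_injective : Function.Injective (part : PlanePartition n → ℕ → ℕ → ℕ) := by
  rintro ⟨⟩ ⟨⟩ h
  congr

theorem antitone_part (j : ℕ) : Antitone (Q.part j) :=
  antitone_nat_of_succ_le (Q.decr_row j)

theorem part_anti {j j' k k' : ℕ} (hj : j ≤ j') (hk : k ≤ k') : Q.part j' k' ≤ Q.part j k :=
  (Q.antitone_part j' hk).trans
    (antitone_nat_of_succ_le (f := fun j => Q.part j k) (fun j => Q.decr_col j k) hj)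

theorem sum_le (s : Finset (ℕ × ℕ)) : ∑ x ∈ s, Q.part x.1 x.2 ≤ n := by
  classical
  have h := Q.sum_eq
  rw [← finsum_curry (fun x : ℕ × ℕ => Q.part x.1 x.2) Q.finite,
    finsum_eq_sum_of_support_subset _ (s := s ∪ Q.finite.toFinset) (by simp)] at h
  exact (sum_le_sum_of_subset subset_union_left).trans h.le

theorem succ_mul_succ_le {j k : ℕ} (h : Q.part j k ≠ 0) : (j + 1) * (k + 1) ≤ n := calc
  (j + 1) * (k + 1) = #(range (j + 1) ×ˢ range (k + 1)) • 1 := by simp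
  _ ≤ ∑ x ∈ range (j + 1) ×ˢ range (k + 1), Q.part x.1 x.2 :=
    card_nsmul_le_sum _ _ _ fun x hx => by
      simp only [mem_product, mem_range, Nat.lt_succ_iff] at hx
      exact (Nat.one_le_iff_ne_zero.2 h).trans (Q.part_anti hx.1 hx.2)
  _ ≤ n := Q.sum_le _

theorem lt_of_part_ne_zero {j k : ℕ} (h : Q.part j k ≠ 0) : j < n ∧ k < n := by
  have := Q.succ_mul_succ_le h
  constructor <;> nlinarith

theorem part_eq_zero_of_le (j : ℕ) {k : ℕ} (hk : n ≤ k) : Q.part j k = 0 :=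
  not_not.1 fun h => (Q.lt_of_part_ne_zero h).2.not_ge hk

noncomputable def nrows : ℕ :=
  Nat.find (⟨n, not_not.1 fun h => lt_irrefl n (Q.lt_of_part_ne_zero h).1⟩ :
    ∃ j, Q.part j 0 = 0)

theorem lt_nrows_iff {j : ℕ} : j < Q.nrows ↔ Q.part j 0 ≠ 0 := by
  rw [nrows, Nat.lt_find_iff]
  exact ⟨fun h => h j le_rfl,
    fun h m hm => ((Nat.pos_of_ne_zero h).trans_le (Q.part_anti hm le_rfl)).ne'⟩

theorem part_eq_zero_of_nrows_le {j : ℕ} (hj : Q.nrows ≤ j) (k : ℕ) : Q.part j k = 0 :=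
  Nat.eq_zero_of_le_zero <| (Q.part_anti le_rfl (Nat.zero_le k)).trans <|
    (not_not.1 (Q.lt_nrows_iff.not.1 hj.not_gt)).le

theorem sum_range_nrows_sum_range : ∑ j ∈ range Q.nrows, ∑ k ∈ range n, Q.part j k = n := by
  rw [← finsum_finsum_eq_sum_range_sum_range, Q.sum_eq]
  intro j k h
  exact ⟨lt_of_not_ge fun hj => h (Q.part_eq_zero_of_nrows_le hj k), (Q.lt_of_part_ne_zero h).2⟩

theorem forall_part_eq_zero_iff_nrows_le (r : ℕ∞) :
    (∀ j : ℕ, r ≤ j → ∀ k, Q.part j k = 0) ↔ (Q.nrows : ℕ∞) ≤ r := by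
  refine ⟨fun h => ?_, fun h j hj => Q.part_eq_zero_of_nrows_le (by exact_mod_cast h.trans hj)⟩
  by_contra! hlt
  obtain ⟨r, rfl⟩ := ENat.ne_top_iff_exists.1 (hlt.trans (ENat.natCast_lt_top _)).ne
  exact Q.lt_nrows_iff.1 (by exact_mod_cast hlt) (h r le_rfl 0)

end Basic

section OfRows

variable {n L : ℕ} (t : Fin L → ℕ → ℕ)

def ofRows (hrow : ∀ j, Antitone (t j))
    (hcol : ∀ j (h : j + 1 < L), t ⟨j + 1, h⟩ ≤ t ⟨j, Nat.lt_of_succ_lt h⟩)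
    (ht : ∀ j k, n ≤ k → t j k = 0) (hsum : ∑ j, ∑ i : Fin n, t j i = n) :
    PlanePartition n where
  part j k := extendByZero t j k
  decr_row j k := by
    unfold extendByZero
    split_ifs
    exacts [hrow _ k.le_succ, le_rfl]
  decr_col j k := by
    unfold extendByZero
    by_cases h : j + 1 < L
    · rw [dif_pos h, dif_pos (Nat.lt_of_succ_lt h)]
      exact hcol j h k
    · rw [dif_neg h]
      exact Nat.zero_le _
  finite := (Set.finite_Iio L |>.prod (Set.finite_Iio n)).subset fun _ hx =>
    lt_and_lt_of_extendByZero_ne_zero ht hx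
  sum_eq := by
    rw [finsum_finsum_eq_sum_range_sum_range _ fun j k => lt_and_lt_of_extendByZero_ne_zero ht,
      ← Fin.sum_univ_eq_sum_range]
    exact (sum_congr rfl fun j _ => by simp [extendByZero, Fin.sum_univ_eq_sum_range]).trans hsum

variable {t} {hrow : ∀ j, Antitone (t j)}
  {hcol : ∀ j (h : j + 1 < L), t ⟨j + 1, h⟩ ≤ t ⟨j, Nat.lt_of_succ_lt h⟩}
  {ht : ∀ j k, n ≤ k → t j k = 0} {hsum : ∑ j, ∑ i : Fin n, t j i = n}

theorem ofRows_part (j : Fin L) (k : ℕ) : (ofRows t hrow hcol ht hsum).part j k = t j k := by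
  simp [ofRows, extendByZero]

theorem nrows_ofRows (h0 : ∀ j, t j 0 ≠ 0) : (ofRows t hrow hcol ht hsum).nrows = L := by
  refine eq_of_forall_lt_iff fun j => ?_
  rw [lt_nrows_iff]
  by_cases hj : j < L
  · simpa [ofRows, extendByZero, hj] using h0 ⟨j, hj⟩
  · simp [ofRows, extendByZero, hj]

end OfRows

section ToAbGroupPartition

variable {n : ℕ} (p : ℕ) [hp : Fact p.Prime]

noncomputable def toAbGroupPartition (Q : PlanePartition n) : AbGroupPartition where
  len := Q.nrows
  factor j := ∀ i : Fin n, ZMod (p ^ Q.part j i)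
  nontriv j := by
    have h0 : Q.part j 0 ≠ 0 := Q.lt_nrows_iff.1 j.isLt
    let i₀ : Fin n := ⟨0, (Q.lt_of_part_ne_zero h0).2⟩
    have : Nontrivial (ZMod (p ^ Q.part j i₀)) :=
      ZMod.nontrivial_iff.2 (Nat.one_lt_pow h0 hp.out.one_lt).ne'
    exact Pi.nontrivial_at i₀
  mono j _ := ⟨AddMonoidHom.piMap fun i => zmodPowEmbedding (Q.decr_col j i),
    fun _ _ h => funext fun i => zmodPowEmbedding_injective (Q.decr_col j i) (congr_fun h i)⟩

theorem prod_card_toAbGroupPartition (Q : PlanePartition n) :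
    ∏ j, Nat.card ((Q.toAbGroupPartition p).factor j) = p ^ n := by
  change ∏ j : Fin Q.nrows, Nat.card (∀ i : Fin n, ZMod (p ^ Q.part j i)) = p ^ n
  simp only [card_pi_zmod_pow, prod_pow_eq_pow_sum, Fin.sum_univ_eq_sum_range (Q.part _),
    Fin.sum_univ_eq_sum_range (fun j => ∑ k ∈ range n, Q.part j k), Q.sum_range_nrows_sum_range]

variable {p}

theorem eq_of_equiv_toAbGroupPartition {Q₁ Q₂ : PlanePartition n}
    (h : (Q₁.toAbGroupPartition p).Equiv (Q₂.toAbGroupPartition p)) : Q₁ = Q₂ := by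
  obtain ⟨hlen, e⟩ := h
  change Q₁.nrows = Q₂.nrows at hlen
  refine part_injective (funext₂ fun j k => ?_)
  rcases lt_or_ge j Q₁.nrows with hj | hj
  · rcases lt_or_ge k n with hk | hk
    · obtain ⟨e⟩ := e ⟨j, hj⟩
      exact eq_of_addEquiv_pi_zmod_pow (Q₁.antitone_part j) (Q₂.antitone_part j) e ⟨k, hk⟩
    · rw [Q₁.part_eq_zero_of_le j hk, Q₂.part_eq_zero_of_le j hk]
  · rw [Q₁.part_eq_zero_of_nrows_le hj, Q₂.part_eq_zero_of_nrows_le (hlen ▸ hj)]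

theorem exists_toAbGroupPartition_equiv (P : AbGroupPartition)
    (hP : ∏ j, Nat.card (P.factor j) = p ^ n) :
    ∃ Q : PlanePartition n, Q.nrows = P.len ∧ (Q.toAbGroupPartition p).Equiv P := by
  have hdvd (j : Fin P.len) : Nat.card (P.factor j) ∣ p ^ n :=
    hP ▸ dvd_prod_of_mem _ (mem_univ j)
  choose t hrow ht φ using fun j => exists_antitone_addEquiv_pi_fin_zmod_pow (P.factor j) (hdvd j)
  have hsum : ∑ j, ∑ i : Fin n, t j i = n := by
    rw [← (Nat.pow_right_injective hp.out.two_le).eq_iff, ← prod_pow_eq_pow_sum, ← hP]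
    exact prod_congr rfl fun j _ =>
      ((Nat.card_congr (φ j).some.toEquiv).trans (card_pi_zmod_pow _)).symm
  have hcol (j : ℕ) (h : j + 1 < P.len) : t ⟨j + 1, h⟩ ≤ t ⟨j, Nat.lt_of_succ_lt h⟩ := by
    intro k
    rcases lt_or_ge k n with hk | hk
    · obtain ⟨f, hf⟩ := P.mono j h
      obtain ⟨φ₁⟩ := φ ⟨j + 1, h⟩
      obtain ⟨φ₀⟩ := φ ⟨j, Nat.lt_of_succ_lt h⟩
      exact le_of_injective_pi_zmod_pow (hrow _) (hrow _)
        (f := φ₀.toAddMonoidHom.comp (f.comp φ₁.symm.toAddMonoidHom))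
        (φ₀.injective.comp (hf.comp φ₁.symm.injective)) ⟨k, hk⟩
    · rw [ht _ k hk, ht _ k hk]
  have h0 (j : Fin P.len) : t j 0 ≠ 0 :=
    have := P.nontriv j
    apply_zero_ne_zero_of_addEquiv (hrow j) (φ j).some
  have hQ : (ofRows t hrow hcol ht hsum).nrows = P.len := nrows_ofRows h0
  refine ⟨ofRows t hrow hcol ht hsum, hQ, hQ, fun j => ?_⟩
  refine ⟨(AddEquiv.piCongrRight fun i => (ZMod.ringEquivCongr ?_).toAddEquiv).trans
    (φ (Fin.cast hQ j)).some.symm⟩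
  exact congrArg (p ^ ·) (ofRows_part (Fin.cast hQ j) i)

end ToAbGroupPartition

end PlanePartition

theorem abelianCount_prime_pow_eq_planePartitionCount_general (p n : ℕ) (hp : p.Prime)
    (r : ℕ∞) :
    abelianCount r (p ^ n) = planePartitionCount r n := by
  have := Fact.mk hp
  have hequiv := AbGroupPartition.equivalence_equiv.comap (Subtype.val :
    {P : AbGroupPartition // (∏ j, Nat.card (P.factor j)) = p ^ n ∧ (P.len : ℕ∞) ≤ r} → _)
  refine (Nat.card_congr (Equiv.ofBijective (fun Q => Quot.mk _
    ⟨Q.1.toAbGroupPartition p, Q.1.prod_card_toAbGroupPartition p,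
      (Q.1.forall_part_eq_zero_iff_nrows_le r).1 Q.2⟩) ⟨fun Q₁ Q₂ h => ?_, Quot.ind ?_⟩)).symm
  · exact Subtype.ext (PlanePartition.eq_of_equiv_toAbGroupPartition
      (hequiv.eqvGen_iff.1 (Quot.eq.1 h)))
  · rintro ⟨P, hP, hlen⟩
    obtain ⟨Q, hQ, hQP⟩ := PlanePartition.exists_toAbGroupPartition_equiv P hP
    exact ⟨⟨Q, (Q.forall_part_eq_zero_iff_nrows_le r).2 (hQ ▸ hlen)⟩, Quot.sound hQP⟩

/-- For a prime `p`, a positive integer `n`, and `r` a positive integer or `r = ⊤`: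
`a_r(p^n) = PL_r(n)`. -/
theorem abelianCount_prime_pow_eq_planePartitionCount (p n : ℕ) (hp : p.Prime) (hn : 0 < n)
    (r : ℕ∞) (hr : r ≠ 0) :
    abelianCount r (p ^ n) = planePartitionCount r n :=
  abelianCount_prime_pow_eq_planePartitionCount_general p n hp r
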